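/- Let α = (α₁ < α₂ < ⋯ < α_{n−k}) be a strictly increasing sequence of positive integers, and consider the (n−k)×(n−k) matrix M with entries M_{i,j} = t^{α_j − i} / (α_j − i)! (where a term is 0 if α_j − i < 0). Then det M = t^{|α|} · Vdm(α) / α!, where |α| = ∑(α_j − j), α! = ∏ (α_j − 1)!, and Vdm(α) = ∏_{i<j} (α_j − α_i). -/

import Mathlib

/-!
Every nonzero term of the Leibniz expansion of the determinant carries the same power of `t`:
for a permutation `σ` the exponents `α_j − σ(j)` add up to `|α|`. Hence the determinant is
`t ^ |α|` times the determinant of the rational matrix `C i j = 1 / (α_j − i)!`. Since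
`1 / (m − k)! = m.descFactorial k / m!` (both sides vanish for `k > m`), the factor
`1 / (α_j − 1)!` comes out of column `j`, leaving the matrix of falling factorials
`(α_j − 1).descFactorial (i − 1)`. As `descPochhammer k` is monic of degree `k`, this matrix has
the Vandermonde determinant of the `α_j − 1`, which is `∏_{i < j} (α_j − α_i)`.
-/

open Finset Matrix Polynomial

open scoped Nat

theorem Finset.prod_filter_fst_lt_snd {ι M : Type*} [Fintype ι] [LinearOrder ι]
    [LocallyFiniteOrderTop ι] [CommMonoid M] (f : ι → ι → M) :
    ∏ p ∈ univ.filter (fun p : ι × ι => p.1 < p.2), f p.1 p.2 = ∏ i, ∏ j ∈ Ioi i, f i j := by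
  rw [prod_filter, ← univ_product_univ, prod_product]
  refine prod_congr rfl fun i _ => ?_
  rw [← prod_filter]
  congr 1
  ext j
  simp

theorem Matrix.det_of_smul_pow_sub {n S R : Type*} [Fintype n] [DecidableEq n] [CommRing S]
    [CommRing R] [Algebra S R] (c : n → n → S) (a b : n → ℕ)
    (hc : ∀ i j, c i j ≠ 0 → b i ≤ a j) (t : R) :
    det (of fun i j => c i j • t ^ (a j - b i)) = det (of c) • t ^ (∑ j, a j - ∑ i, b i) := by
  rw [det_apply, det_apply, sum_smul]
  refine sum_congr rfl fun σ _ => ?_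
  rw [Units.smul_def, Units.smul_def, smul_assoc]
  congr 1
  simp only [of_apply, prod_smul, prod_pow_eq_pow_sum]
  by_cases hσ : ∀ i, b (σ i) ≤ a i
  · rw [sum_tsub_distrib _ fun i _ => hσ i, Equiv.sum_comp σ b]
  · obtain ⟨i, hi⟩ := not_forall.1 hσ
    rw [prod_eq_zero (f := fun i => c (σ i) i) (mem_univ i) (not_not.1 (mt (hc (σ i) i) hi)),
      zero_smul, zero_smul]

theorem inv_factorial_sub_eq_inv_factorial_mul_descFactorial {K : Type*} [Field K] [CharZero K]
    (n k : ℕ) : (if k ≤ n then ((n - k)! : K)⁻¹ else 0) = (n ! : K)⁻¹ * n.descFactorial k := by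
  split_ifs with h
  · have hdesc : (n.descFactorial k : K) ≠ 0 := by
      exact_mod_cast (Nat.descFactorial_pos.2 h).ne'
    rw [← Nat.factorial_mul_descFactorial h, Nat.cast_mul]
    field_simp
  · rw [Nat.descFactorial_eq_zero_iff_lt.2 (not_le.1 h)]
    simp

theorem Matrix.det_of_descFactorial {R : Type*} [CommRing R] [IsDomain R] {d : ℕ}
    (m : Fin d → ℕ) :
    det (of fun i j : Fin d => ((m j).descFactorial i : R)) =
      ∏ i, ∏ j ∈ Ioi i, ((m j : R) - m i) := by
  rw [← det_transpose, ← det_vandermonde,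
    det_eval_matrixOfPolynomials_eq_det_vandermonde (fun i => (m i : R))
      (fun i => descPochhammer R i) (fun i => descPochhammer_natDegree R i)
      (fun i => monic_descPochhammer R i)]
  congr 1
  ext i j
  simp [descPochhammer_eval_eq_descFactorial]

theorem det_of_inv_factorial_sub {K : Type*} [Field K] [CharZero K] {d : ℕ}
    (m : Fin d → ℕ) (hm : Monotone m) :
    det (of fun i j : Fin d => if (i : ℕ) ≤ m j then ((m j - i)! : K)⁻¹ else 0) =
      ((∏ p ∈ univ.filter (fun p : Fin d × Fin d => p.1 < p.2), (m p.2 - m p.1) : ℕ) : K) /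
        ((∏ j, (m j)! : ℕ) : K) := by
  simp only [inv_factorial_sub_eq_inv_factorial_mul_descFactorial]
  have hcols := det_mul_row (fun j => ((m j)! : K)⁻¹) (of fun i j => ((m j).descFactorial i : K))
  simp only [of_apply] at hcols
  rw [hcols, det_of_descFactorial, Nat.cast_prod, Nat.cast_prod,
    prod_filter_fst_lt_snd fun i j => ((m j - m i : ℕ) : K),
    prod_inv_distrib, div_eq_inv_mul]
  congr 1
  refine prod_congr rfl fun i _ => prod_congr rfl fun j hj => ?_
  rw [Nat.cast_sub (hm (mem_Ioi.1 hj).le)]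

theorem det_osculating_minor (R : Type*) [CommRing R] [Algebra ℚ R]
    (d : ℕ) (α : Fin d → ℕ) (hpos : ∀ j, 0 < α j)
    (hmono : StrictMono α) (t : R) :
    Matrix.det (Matrix.of fun i j : Fin d =>
      if (i : ℕ) + 1 ≤ α j then
        (((α j - ((i : ℕ) + 1)).factorial : ℚ))⁻¹ • t ^ (α j - ((i : ℕ) + 1))
      else 0) =
    (((∏ p ∈ Finset.univ.filter (fun p : Fin d × Fin d => p.1 < p.2),
        (α p.2 - α p.1) : ℕ) : ℚ) / ((∏ j, (α j - 1).factorial : ℕ) : ℚ)) •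
      t ^ ((∑ j, α j) - (∑ j : Fin d, ((j : ℕ) + 1))) := by
  simp only [← ite_zero_smul]
  rw [det_of_smul_pow_sub _ α (fun i => (i : ℕ) + 1)
    fun i j h => by_contra fun h' => h (if_neg h')]
  congr 1
  obtain ⟨m, rfl⟩ : ∃ m : Fin d → ℕ, α = fun j => m j + 1 :=
    ⟨fun j => α j - 1, funext fun j => (Nat.sub_add_cancel (hpos j)).symm⟩
  simpa using det_of_inv_factorial_sub (K := ℚ) m fun i j hij => by simpa using hmono.monotone hij
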